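/- Let G be a finitely generated infinite virtually abelian group. Then there exists a finite symmetric generating set T of G and a metric functional f ∈ ∂(G,d_T) of the word metric d_T whose orbit {x.f : x ∈ G} is finite. -/

import Mathlib

open Filter Topology

section Defs

variable {G : Type*}

/-- `d` is a metric on `X` (nonnegative, vanishing exactly on the diagonal,
symmetric, triangle inequality). -/
def IsMetric {X : Type*} (d : X → X → ℝ) : Prop :=
  (∀ x y, 0 ≤ d x y) ∧ (∀ x y, d x y = 0 ↔ x = y) ∧ (∀ x y, d x y = d y x) ∧
    (∀ x y z, d x z ≤ d x y + d y z)

/-- The Busemann function of `x` with base point `1`: `b_x(y) = d(x,y) - d(x,1)`. -/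
def bus [Group G] (d : G → G → ℝ) (x y : G) : ℝ := d x y - d x 1

/-- `h` belongs to the metric-functional boundary `∂(G,d)`: it is a pointwise
limit of Busemann functions and is not itself a Busemann function. -/
def InBoundary [Group G] (d : G → G → ℝ) (h : G → ℝ) : Prop :=
  (∃ u : ℕ → G, ∀ y : G, Tendsto (fun n => bus d (u n) y) atTop (𝓝 (h y))) ∧
    ∀ x : G, h ≠ bus d x

/-- The action of `x ∈ G` on functions: `(x.h)(y) = h(x⁻¹y) - h(x⁻¹)`. -/
def act [Group G] (x : G) (h : G → ℝ) : G → ℝ := fun y => h (x⁻¹ * y) - h x⁻¹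

/-- `S` is a finite symmetric generating set of `G`. -/
def FinSymGen [Group G] (S : Set G) : Prop :=
  S.Finite ∧ (∀ s ∈ S, s⁻¹ ∈ S) ∧ Subgroup.closure S = ⊤

/-- The word length of `x` with respect to `S`: the least `n` such that `x`
is a product of `n` elements of `S`. -/
noncomputable def wordLength [Group G] (S : Set G) (x : G) : ℕ :=
  sInf {n : ℕ | ∃ l : List G, (∀ s ∈ l, s ∈ S) ∧ l.length = n ∧ l.prod = x}

/-- The word metric with respect to `S` : `d_S(x,y) = |x⁻¹y|_S`. -/
noncomputable def wordDist [Group G] (S : Set G) (x y : G) : ℝ :=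
  (wordLength S (x⁻¹ * y) : ℝ)

/-- `(G,d)` is quasi-isometric to a Cayley graph of `G`. -/
def QIToCayley [Group G] (d : G → G → ℝ) : Prop :=
  ∃ S : Set G, FinSymGen S ∧ ∃ φ : G → G, ∃ C : ℝ, 0 < C ∧
    (∀ y : G, ∃ x : G, wordDist S (φ x) y ≤ C) ∧
    ∀ x y : G, C⁻¹ * d x y - C ≤ wordDist S (φ x) (φ y) ∧
      wordDist S (φ x) (φ y) ≤ C * d x y + C

/-- A Banach metric on `G`: an integer-valued, left-invariant, proper metric,
quasi-isometric to a Cayley graph, all of whose metric functionals are unbounded. -/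
def IsBanachMetric [Group G] (d : G → G → ℝ) : Prop :=
  IsMetric d ∧
  (∀ x y : G, ∃ n : ℕ, d x y = n) ∧
  (∀ x y z : G, d (z * x) (z * y) = d x y) ∧
  (∀ r : ℝ, {x : G | d x 1 ≤ r}.Finite) ∧
  QIToCayley d ∧
  ∀ h : G → ℝ, InBoundary d h → ¬ ∃ B : ℝ, ∀ x : G, |h x| ≤ B

/-- A virtual homomorphism on `G`: a function `φ : G → ℤ` restricting to a
nontrivial homomorphism on some finite index subgroup. -/
def IsVirtualHom [Group G] (φ : G → ℤ) : Prop :=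
  ∃ H : Subgroup G, H.FiniteIndex ∧
    (∀ a b : G, a ∈ H → b ∈ H → φ (a * b) = φ a + φ b) ∧
    ∃ a ∈ H, φ a ≠ 0

end Defs

/-!
Pass to a normal abelian subgroup `A` of finite index, a finitely generated `ℤ`-module, and let
`Ψ` be the finite set of conjugates `φ ∘ conj g` of a nonzero functional `φ : A → ℤ`. For a generic
`v₀ ∈ A` a single pair `±σ ∈ Ψ` maximises `|ψ v₀|`. Take `v = N • v₀` with `N` large and let `T`
consist of generators of `G`, of `v`, and of the steps `z v⁻¹` for generators `z` of `ker σ`,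
symmetrised. The length `max_{ψ ∈ Ψ} |ψ|` on `A`, extended to a subadditive weight on `G`, is
`N |σ v₀|` at `v` and at most that on `T`, so `|vᵐ|_T = m`.

The horofunction `h z = lim (|v⁻ᵐ z|_T - m)` then satisfies `h (vᵗ z) = h z - t` and is invariant
under `ker σ`, since `|b v⁻ᵏ|_T ≤ k` for `b ∈ ker σ` and suitable `k`. As `G = ⋃ v^ℤ (ker σ) Y`
with `Y` finite, `x.h` only depends on the `Y`-component of `x⁻¹`: the orbit is finite. Finally
`h` is not a Busemann function because it is unbounded below.
-/

open Pointwise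

section WordLength

variable {G : Type*} [Group G] {S : Set G}

theorem exists_list_prod_eq (hsym : ∀ s ∈ S, s⁻¹ ∈ S) (hgen : Subgroup.closure S = ⊤) (x : G) :
    ∃ l : List G, (∀ s ∈ l, s ∈ S) ∧ l.prod = x := by
  have hx : x ∈ Submonoid.closure (S ∪ S⁻¹) := by
    rw [← Subgroup.closure_toSubmonoid, hgen]; trivial
  obtain ⟨l, hl, rfl⟩ := Submonoid.exists_list_of_mem_closure hx
  refine ⟨l, fun s hs => ?_, rfl⟩
  rcases hl s hs with h | h
  · exact h
  · simpa using hsym _ h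

theorem wordLength_le_length {x : G} (l : List G) (hl : ∀ s ∈ l, s ∈ S) (hx : l.prod = x) :
    wordLength S x ≤ l.length :=
  Nat.sInf_le ⟨l, hl, rfl, hx⟩

theorem exists_list_length_eq_wordLength (hsym : ∀ s ∈ S, s⁻¹ ∈ S)
    (hgen : Subgroup.closure S = ⊤) (x : G) :
    ∃ l : List G, (∀ s ∈ l, s ∈ S) ∧ l.length = wordLength S x ∧ l.prod = x :=
  Nat.sInf_mem (s := {n | ∃ l : List G, (∀ s ∈ l, s ∈ S) ∧ l.length = n ∧ l.prod = x}) <|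
    let ⟨l, hl, hx⟩ := exists_list_prod_eq hsym hgen x; ⟨l.length, l, hl, rfl, hx⟩

theorem wordLength_one : wordLength S (1 : G) = 0 :=
  Nat.le_zero.mp (wordLength_le_length [] (by simp) rfl)

theorem wordLength_le_one {s : G} (hs : s ∈ S) : wordLength S s ≤ 1 :=
  wordLength_le_length [s] (by simpa using hs) (by simp)

theorem wordLength_pow_le {s : G} (hs : s ∈ S) (n : ℕ) : wordLength S (s ^ n) ≤ n := by
  simpa using wordLength_le_length (List.replicate n s)
    (fun t ht => (List.eq_of_mem_replicate ht).symm ▸ hs) (List.prod_replicate n s)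

theorem wordLength_mul_le (hsym : ∀ s ∈ S, s⁻¹ ∈ S) (hgen : Subgroup.closure S = ⊤) (x y : G) :
    wordLength S (x * y) ≤ wordLength S x + wordLength S y := by
  obtain ⟨l₁, hl₁, hlen₁, rfl⟩ := exists_list_length_eq_wordLength hsym hgen x
  obtain ⟨l₂, hl₂, hlen₂, rfl⟩ := exists_list_length_eq_wordLength hsym hgen y
  rw [← hlen₁, ← hlen₂, ← List.length_append, ← List.prod_append]
  exact wordLength_le_length _ (fun s hs => (List.mem_append.mp hs).elim (hl₁ s) (hl₂ s)) rfl

theorem wordLength_inv_le (hsym : ∀ s ∈ S, s⁻¹ ∈ S) (hgen : Subgroup.closure S = ⊤) (x : G) :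
    wordLength S x⁻¹ ≤ wordLength S x := by
  obtain ⟨l, hl, hlen, rfl⟩ := exists_list_length_eq_wordLength hsym hgen x
  rw [← hlen, ← List.length_reverse, ← List.length_map (·⁻¹), List.prod_inv_reverse]
  refine wordLength_le_length _ (fun s hs => ?_) (by rw [List.map_reverse])
  obtain ⟨t, ht, rfl⟩ := List.mem_map.mp hs
  exact hsym t (hl t (List.mem_reverse.mp ht))

theorem wordLength_inv (hsym : ∀ s ∈ S, s⁻¹ ∈ S) (hgen : Subgroup.closure S = ⊤) (x : G) :
    wordLength S x⁻¹ = wordLength S x :=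
  (wordLength_inv_le hsym hgen x).antisymm (by simpa using wordLength_inv_le hsym hgen x⁻¹)

theorem le_mul_wordLength (hsym : ∀ s ∈ S, s⁻¹ ∈ S) (hgen : Subgroup.closure S = ⊤)
    {ν : G → ℕ} (hν_one : ν 1 = 0) (hν_mul : ∀ x y, ν (x * y) ≤ ν x + ν y)
    {R : ℕ} (hνS : ∀ s ∈ S, ν s ≤ R) (x : G) :
    ν x ≤ R * wordLength S x := by
  obtain ⟨l, hl, hlen, rfl⟩ := exists_list_length_eq_wordLength hsym hgen x
  rw [← hlen]
  clear hlen
  induction l with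
  | nil => simp [hν_one]
  | cons s l ih =>
    rw [List.prod_cons, List.length_cons, mul_add_one, add_comm (R * _)]
    exact (hν_mul _ _).trans (add_le_add (hνS s (hl s (by simp)))
      (ih fun t ht => hl t (List.mem_cons_of_mem s ht)))

theorem wordLength_pow_eq (hsym : ∀ s ∈ S, s⁻¹ ∈ S) (hgen : Subgroup.closure S = ⊤)
    {ν : G → ℕ} (hν_one : ν 1 = 0) (hν_mul : ∀ x y, ν (x * y) ≤ ν x + ν y)
    {R : ℕ} (hR : 0 < R) (hνS : ∀ s ∈ S, ν s ≤ R) {v : G} (hv : v ∈ S)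
    (hνv : ∀ m : ℕ, ν (v ^ m) = m * R) (m : ℕ) :
    wordLength S (v ^ m) = m := by
  refine (wordLength_pow_le hv m).antisymm (Nat.le_of_mul_le_mul_left ?_ hR)
  rw [mul_comm, ← hνv]
  exact le_mul_wordLength hsym hgen hν_one hν_mul hνS _

theorem commute_and_exists_wordLength_mul_inv_pow_le (hsym : ∀ s ∈ S, s⁻¹ ∈ S)
    (hgen : Subgroup.closure S = ⊤) {v : G} {Z : Set G}
    (hZ : ∀ z ∈ Z, Commute v z ∧ z * v⁻¹ ∈ S ∧ z⁻¹ * v⁻¹ ∈ S) {b : G}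
    (hb : b ∈ Subgroup.closure Z) :
    Commute v b ∧ ∃ k : ℕ, wordLength S (b * (v ^ k)⁻¹) ≤ k := by
  induction hb using Subgroup.closure_induction'' with
  | mem z hz => exact ⟨(hZ z hz).1, 1, by simpa using wordLength_le_one (hZ z hz).2.1⟩
  | inv_mem z hz => exact ⟨(hZ z hz).1.inv_right, 1, by simpa using wordLength_le_one (hZ z hz).2.2⟩
  | one => exact ⟨Commute.one_right v, 0, by simp [wordLength_one]⟩
  | mul x y _ _ hx hy =>
    obtain ⟨hxv, k, hk⟩ := hx
    obtain ⟨hyv, l, hl⟩ := hy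
    refine ⟨hxv.mul_right hyv, k + l, ?_⟩
    have hsplit : x * y * (v ^ (k + l))⁻¹ = x * (v ^ k)⁻¹ * (y * (v ^ l)⁻¹) := by
      have hc : Commute (y * (v ^ l)⁻¹) (v ^ k)⁻¹ :=
        ((hyv.mul_right ((Commute.refl v).pow_right l).inv_right).pow_left k).inv_left.symm
      rw [pow_add, mul_inv_rev, ← mul_assoc, mul_assoc x, mul_assoc x, hc.eq, ← mul_assoc]
    rw [hsplit]
    exact (wordLength_mul_le hsym hgen _ _).trans (add_le_add hk hl)

theorem finSymGen_union_inv (hfin : S.Finite) (hgen : Subgroup.closure S = ⊤) :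
    FinSymGen (S ∪ S⁻¹) := by
  refine ⟨hfin.union hfin.inv, fun s hs => ?_, top_le_iff.mp (hgen ▸ Subgroup.closure_mono
    Set.subset_union_left)⟩
  rcases hs with hs | hs
  · exact Or.inr (by simpa using hs)
  · exact Or.inl hs

end WordLength

section Horofunction

variable {G : Type*} [Group G] {T : Set G} {v : G}

/-- When `m ↦ v ^ m` is a geodesic ray, this is the limit of the Busemann functions
`bus (wordDist T) (v ^ m)` (see `tendsto_bus_pow`). -/
noncomputable def horofunction (T : Set G) (v z : G) : ℤ :=
  ⨅ m : ℕ, ((wordLength T ((v ^ m)⁻¹ * z) : ℤ) - m)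

theorem bddBelow_range_wordLength_sub (hsym : ∀ s ∈ T, s⁻¹ ∈ T) (hgen : Subgroup.closure T = ⊤)
    (hlen : ∀ m : ℕ, wordLength T (v ^ m) = m) (z : G) :
    BddBelow (Set.range fun m : ℕ => (wordLength T ((v ^ m)⁻¹ * z) : ℤ) - m) := by
  refine ⟨-(wordLength T z⁻¹ : ℤ), ?_⟩
  rintro _ ⟨m, rfl⟩
  have h := wordLength_mul_le hsym hgen ((v ^ m)⁻¹ * z) z⁻¹
  rw [mul_inv_cancel_right, wordLength_inv hsym hgen, hlen] at h
  dsimp only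
  omega

theorem wordLength_sub_succ_le (hsym : ∀ s ∈ T, s⁻¹ ∈ T) (hgen : Subgroup.closure T = ⊤)
    (hlen : ∀ m : ℕ, wordLength T (v ^ m) = m) (z : G) (m : ℕ) :
    (wordLength T ((v ^ (m + 1))⁻¹ * z) : ℤ) - (m + 1 : ℕ)
      ≤ (wordLength T ((v ^ m)⁻¹ * z) : ℤ) - m := by
  have h := wordLength_mul_le hsym hgen v⁻¹ ((v ^ m)⁻¹ * z)
  rw [← mul_assoc, ← mul_inv_rev, ← pow_succ] at h
  have h1 : wordLength T v⁻¹ = 1 := by simpa [wordLength_inv hsym hgen] using hlen 1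
  push_cast
  omega

theorem horofunction_le (hsym : ∀ s ∈ T, s⁻¹ ∈ T) (hgen : Subgroup.closure T = ⊤)
    (hlen : ∀ m : ℕ, wordLength T (v ^ m) = m) (z : G) (m : ℕ) :
    horofunction T v z ≤ (wordLength T ((v ^ m)⁻¹ * z) : ℤ) - m :=
  ciInf_le (bddBelow_range_wordLength_sub hsym hgen hlen z) m

/-- The sequence defining the horofunction is antitone and integer valued, hence eventually
constant. -/
theorem eventually_wordLength_sub_eq_horofunction (hsym : ∀ s ∈ T, s⁻¹ ∈ T)
    (hgen : Subgroup.closure T = ⊤) (hlen : ∀ m : ℕ, wordLength T (v ^ m) = m)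
    (z : G) :
    ∀ᶠ m : ℕ in atTop, (wordLength T ((v ^ m)⁻¹ * z) : ℤ) - m = horofunction T v z := by
  obtain ⟨m₀, hm₀⟩ := Int.csInf_mem (Set.range_nonempty _)
    (bddBelow_range_wordLength_sub hsym hgen hlen z)
  have hanti : Antitone fun m : ℕ => (wordLength T ((v ^ m)⁻¹ * z) : ℤ) - m :=
    antitone_nat_of_succ_le (wordLength_sub_succ_le hsym hgen hlen z)
  filter_upwards [eventually_ge_atTop m₀] with m hm
  exact ((hanti hm).trans_eq hm₀).antisymm (horofunction_le hsym hgen hlen z m)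

theorem horofunction_self_mul (hsym : ∀ s ∈ T, s⁻¹ ∈ T) (hgen : Subgroup.closure T = ⊤)
    (hlen : ∀ m : ℕ, wordLength T (v ^ m) = m) (z : G) :
    horofunction T v (v * z) = horofunction T v z - 1 := by
  obtain ⟨m, hvz, hz⟩ := ((tendsto_add_atTop_nat 1).eventually
    (eventually_wordLength_sub_eq_horofunction hsym hgen hlen (v * z))).and
    (eventually_wordLength_sub_eq_horofunction hsym hgen hlen z) |>.exists
  rw [← hvz, ← hz, pow_succ', mul_inv_rev, mul_assoc, inv_mul_cancel_left]
  push_cast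
  ring

theorem horofunction_zpow_mul (hsym : ∀ s ∈ T, s⁻¹ ∈ T) (hgen : Subgroup.closure T = ⊤)
    (hlen : ∀ m : ℕ, wordLength T (v ^ m) = m) (t : ℤ) (z : G) :
    horofunction T v (v ^ t * z) = horofunction T v z - t := by
  induction t using Int.induction_on generalizing z with
  | zero => simp
  | succ n ih =>
    rw [zpow_add_one, mul_assoc, ih, horofunction_self_mul hsym hgen hlen]
    ring
  | pred n ih =>
    have h := horofunction_self_mul hsym hgen hlen (v ^ (-(n : ℤ) - 1) * z)
    rw [← mul_assoc, ← zpow_one_add, add_sub_cancel, ih] at h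
    omega

theorem horofunction_mul_le (hsym : ∀ s ∈ T, s⁻¹ ∈ T) (hgen : Subgroup.closure T = ⊤)
    (hlen : ∀ m : ℕ, wordLength T (v ^ m) = m) {b : G} (hb : Commute v b) {k : ℕ}
    (hk : wordLength T (b * (v ^ k)⁻¹) ≤ k) (z : G) :
    horofunction T v (b * z) ≤ horofunction T v z := by
  obtain ⟨m, hm⟩ := (eventually_wordLength_sub_eq_horofunction hsym hgen hlen z).exists
  have hsplit : (v ^ (m + k))⁻¹ * (b * z) = b * (v ^ k)⁻¹ * ((v ^ m)⁻¹ * z) := by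
    have hm : Commute b (v ^ m)⁻¹ := (hb.pow_left m).inv_left.symm
    have hk : Commute b (v ^ k)⁻¹ := (hb.pow_left k).inv_left.symm
    rw [pow_add, mul_inv_rev, mul_assoc, ← mul_assoc _ b, ← hm.eq, ← mul_assoc, ← mul_assoc,
      ← hk.eq, mul_assoc, mul_assoc]
  have h := wordLength_mul_le hsym hgen (b * (v ^ k)⁻¹) ((v ^ m)⁻¹ * z)
  rw [← hsplit] at h
  calc horofunction T v (b * z) ≤ (wordLength T ((v ^ (m + k))⁻¹ * (b * z)) : ℤ) - (m + k : ℕ) :=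
        horofunction_le hsym hgen hlen _ _
    _ ≤ (wordLength T ((v ^ m)⁻¹ * z) : ℤ) - m := by push_cast; omega
    _ = horofunction T v z := hm

theorem horofunction_mul_of_mem (hsym : ∀ s ∈ T, s⁻¹ ∈ T) (hgen : Subgroup.closure T = ⊤)
    (hlen : ∀ m : ℕ, wordLength T (v ^ m) = m) {K : Subgroup G}
    (hK : ∀ b ∈ K, Commute v b ∧ ∃ k : ℕ, wordLength T (b * (v ^ k)⁻¹) ≤ k)
    {b : G} (hb : b ∈ K) (z : G) :
    horofunction T v (b * z) = horofunction T v z := by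
  have hle : ∀ b ∈ K, ∀ z, horofunction T v (b * z) ≤ horofunction T v z := fun b hb z =>
    let ⟨hvb, _, hk⟩ := hK b hb
    horofunction_mul_le hsym hgen hlen hvb hk z
  refine (hle b hb z).antisymm ?_
  simpa using hle b⁻¹ (K.inv_mem hb) (b * z)

theorem tendsto_bus_pow (hsym : ∀ s ∈ T, s⁻¹ ∈ T) (hgen : Subgroup.closure T = ⊤)
    (hlen : ∀ m : ℕ, wordLength T (v ^ m) = m) (z : G) :
    Tendsto (fun m : ℕ => bus (wordDist T) (v ^ m) z) atTop (𝓝 (horofunction T v z : ℝ)) := by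
  refine tendsto_const_nhds.congr' ?_
  filter_upwards [eventually_wordLength_sub_eq_horofunction hsym hgen hlen z] with m hm
  rw [bus, wordDist, wordDist, mul_one, wordLength_inv hsym hgen, hlen, ← hm]
  push_cast
  rfl

/-- Busemann functions are bounded below by `-|x|`, while the horofunction tends to `-∞` along
the powers of `v`. -/
theorem horofunction_ne_bus (hsym : ∀ s ∈ T, s⁻¹ ∈ T) (hgen : Subgroup.closure T = ⊤)
    (hlen : ∀ m : ℕ, wordLength T (v ^ m) = m) (x : G) :
    (fun z => (horofunction T v z : ℝ)) ≠ bus (wordDist T) x := by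
  intro h
  set n := wordLength T x⁻¹ + 1
  have hv : horofunction T v (v ^ n) ≤ -(n : ℤ) := by
    simpa [wordLength_one] using horofunction_le hsym hgen hlen (v ^ n) n
  have hbus : -((n : ℝ) - 1) ≤ bus (wordDist T) x (v ^ n) := by
    simp only [bus, wordDist, mul_one, n]
    push_cast
    linarith [(Nat.cast_nonneg (wordLength T (x⁻¹ * v ^ n)) : (0 : ℝ) ≤ _)]
  have hv' : (horofunction T v (v ^ n) : ℝ) ≤ -(n : ℝ) := by exact_mod_cast hv
  rw [congrFun h] at hv'
  linarith

theorem inBoundary_horofunction (hsym : ∀ s ∈ T, s⁻¹ ∈ T) (hgen : Subgroup.closure T = ⊤)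
    (hlen : ∀ m : ℕ, wordLength T (v ^ m) = m) :
    InBoundary (wordDist T) fun z => (horofunction T v z : ℝ) :=
  ⟨⟨(v ^ ·), tendsto_bus_pow hsym hgen hlen⟩, horofunction_ne_bus hsym hgen hlen⟩

/-- `x` acts on the horofunction as `y⁻¹` when `x⁻¹ ∈ vᵗ K y`. -/
theorem finite_range_act_horofunction (hsym : ∀ s ∈ T, s⁻¹ ∈ T) (hgen : Subgroup.closure T = ⊤)
    (hlen : ∀ m : ℕ, wordLength T (v ^ m) = m) {K : Subgroup G}
    (hK : ∀ b ∈ K, Commute v b ∧ ∃ k : ℕ, wordLength T (b * (v ^ k)⁻¹) ≤ k)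
    {Y : Set G} (hY : Y.Finite) (hcover : ∀ x : G, ∃ t : ℤ, ∃ b ∈ K, ∃ y ∈ Y, x = v ^ t * b * y) :
    (Set.range fun x : G => act x fun z => (horofunction T v z : ℝ)).Finite := by
  refine (hY.image fun y => act y⁻¹ fun z => (horofunction T v z : ℝ)).subset ?_
  rintro _ ⟨x, rfl⟩
  obtain ⟨t, b, hb, y, hy, hx⟩ := hcover x⁻¹
  have key : ∀ z, horofunction T v (x⁻¹ * z) = horofunction T v (y * z) - t := fun z => by
    rw [hx, mul_assoc, mul_assoc, horofunction_zpow_mul hsym hgen hlen,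
      horofunction_mul_of_mem hsym hgen hlen hK hb]
  refine ⟨y, hy, funext fun z => ?_⟩
  have h1 := key 1
  rw [mul_one, mul_one] at h1
  simp only [act, inv_inv, key z, h1]
  push_cast
  ring

end Horofunction

section SupAbs

variable {M : Type*} [AddCommGroup M]

noncomputable def supAbs (Ψ : Finset (M →+ ℤ)) (m : M) : ℕ :=
  Ψ.sup fun ψ => (ψ m).natAbs

theorem natAbs_le_supAbs {Ψ : Finset (M →+ ℤ)} {ψ : M →+ ℤ} (hψ : ψ ∈ Ψ) (m : M) :
    (ψ m).natAbs ≤ supAbs Ψ m :=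
  Finset.le_sup (f := fun ψ => (ψ m).natAbs) hψ

theorem supAbs_zero (Ψ : Finset (M →+ ℤ)) : supAbs Ψ 0 = 0 := by
  simp [supAbs]

theorem supAbs_neg (Ψ : Finset (M →+ ℤ)) (m : M) : supAbs Ψ (-m) = supAbs Ψ m := by
  simp [supAbs]

theorem supAbs_add_le (Ψ : Finset (M →+ ℤ)) (m n : M) :
    supAbs Ψ (m + n) ≤ supAbs Ψ m + supAbs Ψ n :=
  Finset.sup_le fun ψ hψ => by
    rw [map_add]
    exact (Int.natAbs_add_le _ _).trans
      (add_le_add (natAbs_le_supAbs hψ m) (natAbs_le_supAbs hψ n))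

theorem supAbs_nsmul (Ψ : Finset (M →+ ℤ)) (n : ℕ) (m : M) :
    supAbs Ψ (n • m) = n * supAbs Ψ m := by
  simp only [supAbs, map_nsmul, nsmul_eq_mul, Int.natAbs_mul, Int.natAbs_natCast]
  exact (Finset.mul_sup₀ _ _ _).symm

theorem supAbs_sub_nsmul_le {Ψ : Finset (M →+ ℤ)} {σ : M →+ ℤ} {v₀ : M}
    (hdom : ∀ ψ ∈ Ψ, ψ = σ ∨ ψ = -σ ∨ (ψ v₀).natAbs < (σ v₀).natAbs)
    {κ : M} (hκ : σ κ = 0) {N : ℕ} (hN : supAbs Ψ κ ≤ N) :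
    supAbs Ψ (κ - N • v₀) ≤ N * (σ v₀).natAbs := by
  refine Finset.sup_le fun ψ hψ => ?_
  rw [map_sub, map_nsmul, nsmul_eq_mul]
  rcases hdom ψ hψ with rfl | rfl | hlt
  · simp [hκ, Int.natAbs_mul]
  · simp [hκ, Int.natAbs_mul]
  · calc (ψ κ - N * ψ v₀).natAbs ≤ (ψ κ).natAbs + N * (ψ v₀).natAbs := by
          simpa [Int.natAbs_mul] using Int.natAbs_sub_le (ψ κ) (N * ψ v₀)
      _ ≤ N + N * (ψ v₀).natAbs := by gcongr; exact (natAbs_le_supAbs hψ κ).trans hN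
      _ = N * ((ψ v₀).natAbs + 1) := by ring
      _ ≤ N * (σ v₀).natAbs := by gcongr; exact hlt

end SupAbs

/-- Otherwise the kernels cover `M`, so by Neumann's lemma one of them has finite index. -/
theorem exists_forall_apply_ne_zero {M : Type*} [AddCommGroup M] (s : Finset (M →+ ℤ))
    (hs : ∀ δ ∈ s, δ ≠ 0) : ∃ v, ∀ δ ∈ s, δ v ≠ 0 := by
  by_contra! h
  obtain ⟨δ, hδ, hfin⟩ := AddSubgroup.exists_finiteIndex_of_leftCoset_cover
    (H := AddMonoidHom.ker) (g := fun _ => (0 : M)) (s := s) (by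
      ext v
      simpa using h v)
  refine hs δ hδ (AddMonoidHom.ext fun m => ?_)
  have hmem := δ.ker.nsmul_index_mem m
  rw [AddMonoidHom.mem_ker, map_nsmul, nsmul_eq_mul] at hmem
  exact (mul_eq_zero.mp hmem).resolve_left (by exact_mod_cast hfin.index_ne_zero)

/-- A generic `v₀` separates the values `±ψ v₀` of distinct `ψ ∈ Ψ`. -/
theorem exists_dominant_functional {M : Type*} [AddCommGroup M] (Ψ : Finset (M →+ ℤ))
    {φ : M →+ ℤ} (hφ : φ ∈ Ψ) (hφ0 : φ ≠ 0) :
    ∃ v₀ : M, ∃ σ ∈ Ψ, σ v₀ ≠ 0 ∧ (σ v₀).natAbs = supAbs Ψ v₀ ∧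
      ∀ ψ ∈ Ψ, ψ = σ ∨ ψ = -σ ∨ (ψ v₀).natAbs < (σ v₀).natAbs := by
  classical
  set D := Ψ ∪ (Ψ ×ˢ Ψ).image (fun p => p.1 - p.2) ∪ (Ψ ×ˢ Ψ).image (fun p => p.1 + p.2)
  obtain ⟨v₀, hv₀⟩ := exists_forall_apply_ne_zero (D.filter (· ≠ 0))
    fun δ hδ => (Finset.mem_filter.mp hδ).2
  have hD : ∀ δ ∈ D, δ v₀ = 0 → δ = 0 := fun δ hδ h0 => by
    by_contra hδ0
    exact hv₀ δ (Finset.mem_filter.mpr ⟨hδ, hδ0⟩) h0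
  obtain ⟨σ, hσ, hσmax⟩ := Finset.exists_mem_eq_sup Ψ ⟨φ, hφ⟩ fun ψ => (ψ v₀).natAbs
  have hσmax' : (σ v₀).natAbs = supAbs Ψ v₀ := hσmax.symm
  refine ⟨v₀, σ, hσ, fun h => ?_, hσmax', fun ψ hψ => ?_⟩
  · have hφv : φ v₀ ≠ 0 := fun h0 => hφ0 (hD φ (by simp [D, hφ]) h0)
    have := natAbs_le_supAbs hφ v₀
    rw [← hσmax', h] at this
    omega
  · rcases (hσmax' ▸ natAbs_le_supAbs hψ v₀).lt_or_eq with hlt | heq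
    · exact Or.inr (Or.inr hlt)
    rcases Int.natAbs_eq_natAbs_iff.mp heq with h | h
    · refine Or.inl (sub_eq_zero.mp (hD _ ?_ (by simp [h])))
      simp only [D, Finset.mem_union, Finset.mem_image, Finset.mem_product]
      exact Or.inl (Or.inr ⟨(ψ, σ), ⟨hψ, hσ⟩, rfl⟩)
    · refine Or.inr (Or.inl (eq_neg_of_add_eq_zero_left (hD _ ?_ (by simp [h]))))
      simp only [D, Finset.mem_union, Finset.mem_image, Finset.mem_product]
      exact Or.inr ⟨(ψ, σ), ⟨hψ, hσ⟩, rfl⟩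

/-- Divide `σ m` by `σ w` with remainder. -/
theorem exists_finite_forall_eq_zsmul_add_add {M : Type*} [AddCommGroup M] (σ : M →+ ℤ) {w : M}
    (hw : σ w ≠ 0) :
    ∃ Y : Set M, Y.Finite ∧ ∀ m : M, ∃ t : ℤ, ∃ k, σ k = 0 ∧ ∃ y ∈ Y, m = t • w + k + y := by
  classical
  let lift : ℤ → M := fun j => if h : ∃ y, σ y = j then h.choose else 0
  refine ⟨lift '' Set.Ico 0 ((σ w).natAbs : ℤ), (Set.finite_Ico _ _).image _, fun m => ?_⟩
  have hr : σ (m - (σ m / σ w) • w) = σ m % σ w := by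
    rw [map_sub, map_zsmul, smul_eq_mul, Int.emod_def, mul_comm]
  have hlift : σ (lift (σ m % σ w)) = σ m % σ w := by
    have h : ∃ y, σ y = σ m % σ w := ⟨_, hr⟩
    simp only [lift, dif_pos h]
    exact h.choose_spec
  refine ⟨σ m / σ w, m - (σ m / σ w) • w - lift (σ m % σ w), ?_, lift (σ m % σ w),
    ⟨σ m % σ w, ⟨Int.emod_nonneg _ hw, Int.emod_lt _ hw⟩, rfl⟩, by abel⟩
  rw [map_sub, hr, hlift, sub_self]

theorem exists_addMonoidHom_int_ne_zero (M : Type*) [AddCommGroup M] [AddGroup.FG M]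
    [Infinite M] : ∃ φ : M →+ ℤ, φ ≠ 0 := by
  have : Module.Finite ℤ M := Module.Finite.iff_addGroup_fg.mpr ‹_›
  obtain ⟨x, hx⟩ : ∃ x, x ∉ Submodule.torsion ℤ M := by
    by_contra! h
    have := Module.finite_of_fg_torsion M fun x => (Submodule.mem_torsion_iff x).mp (h x)
    exact not_finite M
  obtain ⟨f, hf, -⟩ := Submodule.exists_dual_map_eq_bot_of_notMem hx inferInstance
  exact ⟨f.toAddMonoidHom, fun h => hf (DFunLike.congr_fun h x)⟩

/-- `w` is a large multiple of a generic `v₀`, and `σ` the functional dominating at `v₀`. -/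
theorem exists_direction_absorbing_ker {M : Type*} [AddCommGroup M] [AddGroup.FG M]
    (Ψ : Finset (M →+ ℤ)) {φ : M →+ ℤ} (hφ : φ ∈ Ψ) (hφ0 : φ ≠ 0) (B : ℕ) :
    ∃ (w : M) (σ : M →+ ℤ) (Z : Finset M), σ w ≠ 0 ∧ B < supAbs Ψ w ∧
      σ.ker ≤ AddSubgroup.closure Z ∧ ∀ z ∈ Z, -z ∈ Z ∧ supAbs Ψ (z - w) ≤ supAbs Ψ w := by
  classical
  obtain ⟨v₀, σ, -, hσ0, hσmax, hdom⟩ := exists_dominant_functional Ψ hφ hφ0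
  have : Module.Finite ℤ M := Module.Finite.iff_addGroup_fg.mpr ‹_›
  obtain ⟨κF, hκF⟩ := IsNoetherian.noetherian (AddSubgroup.toIntSubmodule σ.ker)
  have hker : σ.ker = AddSubgroup.closure κF := by
    rw [← Submodule.span_int_eq_addSubgroupClosure, hκF]; rfl
  set N := B + κF.sup (supAbs Ψ) + 1
  have hw : supAbs Ψ (N • v₀) = N * (σ v₀).natAbs := by rw [supAbs_nsmul, hσmax]
  refine ⟨N • v₀, σ, κF ∪ -κF, ?_, ?_, ?_, fun z hz => ⟨?_, ?_⟩⟩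
  · rw [map_nsmul, nsmul_eq_mul]
    exact mul_ne_zero (by positivity) hσ0
  · rw [hw]
    exact (Nat.lt_succ_of_le (Nat.le_add_right B _)).trans_le
      (Nat.le_mul_of_pos_right N (Int.natAbs_pos.mpr hσ0))
  · rw [hker]
    exact AddSubgroup.closure_mono (by simp)
  · simpa [or_comm] using hz
  · have hκ : ∀ κ ∈ κF, σ κ = 0 ∧ supAbs Ψ κ ≤ N := fun κ hκ =>
      ⟨σ.mem_ker.mp (hker ▸ AddSubgroup.subset_closure hκ), (Finset.le_sup hκ).trans (by omega)⟩
    have hz' : σ z = 0 ∧ supAbs Ψ z ≤ N := by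
      rcases Finset.mem_union.mp hz with hz | hz
      · exact hκ z hz
      · obtain ⟨h0, hle⟩ := hκ (-z) (Finset.mem_neg'.mp hz)
        rw [map_neg, neg_eq_zero] at h0
        rw [supAbs_neg] at hle
        exact ⟨h0, hle⟩
    rw [hw]
    exact supAbs_sub_nsmul_le hdom hz'.1 hz'.2

section Extension

variable {G : Type*} [Group G] {A : Subgroup G} {Q : Set G}

theorem Subgroup.IsComplement.equiv_fst_mul (hQ : Subgroup.IsComplement (A : Set G) Q) [A.Normal]
    (x y : G) :
    (hQ.equiv (x * y)).1 = (hQ.equiv x).1 * MulAut.conjNormal ((hQ.equiv x).2 : G) (hQ.equiv y).1 *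
      (hQ.equiv ((hQ.equiv x).2 * (hQ.equiv y).2)).1 := by
  have hxy : x * y = ((hQ.equiv x).1 * MulAut.conjNormal ((hQ.equiv x).2 : G) (hQ.equiv y).1 : A) *
      ((hQ.equiv x).2 * (hQ.equiv y).2) := by
    conv_lhs => rw [← hQ.equiv_fst_mul_equiv_snd x, ← hQ.equiv_fst_mul_equiv_snd y]
    rw [Subgroup.coe_mul, MulAut.conjNormal_apply]
    group
  rw [hxy, hQ.equiv_mul_left]

theorem Subgroup.IsComplement.equiv_fst_snd_mul_snd_eq_one
    (hQ : Subgroup.IsComplement (A : Set G) Q) (hQ1 : 1 ∈ Q) {x y : G} (h : x ∈ A ∨ y ∈ A) :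
    (hQ.equiv ((hQ.equiv x).2 * (hQ.equiv y).2)).1 = 1 := by
  have hq : ∀ z, (hQ.equiv (hQ.equiv z).2).1 = 1 := fun z => by
    rw [hQ.equiv_fst_eq_one_of_mem_of_one_mem A.one_mem (hQ.equiv z).2.2]; rfl
  rcases h with h | h
  · rw [hQ.equiv_snd_eq_one_of_mem_of_one_mem hQ1 h, one_mul, hq]
  · rw [hQ.equiv_snd_eq_one_of_mem_of_one_mem hQ1 h, mul_one, hq]

/-- Write `x = a q` with `q` in a transversal `Q ∋ 1`, weigh `a`, and pay a fixed penalty `C` for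
leaving `A`; it pays for the cocycle `(q q')_A`, which is trivial when `q` or `q'` is `1`. -/
theorem Subgroup.exists_subadditive_extension (A : Subgroup G) [A.Normal] [A.FiniteIndex]
    (ℓ : A → ℕ) (hℓ_one : ℓ 1 = 0) (hℓ_mul : ∀ a b, ℓ (a * b) ≤ ℓ a + ℓ b)
    (hℓ_conj : ∀ (g : G) (a : A), ℓ (MulAut.conjNormal g a) ≤ ℓ a) :
    ∃ ν : G → ℕ, (∀ x y, ν (x * y) ≤ ν x + ν y) ∧ ∀ a : A, ν a = ℓ a := by
  classical
  obtain ⟨Q, hQ, hQ1⟩ := A.exists_isComplement_right 1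
  set e := hQ.equiv
  set C := (hQ.finite_right.toFinset ×ˢ hQ.finite_right.toFinset).sup
    fun p => ℓ (e (p.1 * p.2)).1
  have hC : ∀ x y, ℓ (e ((e x).2 * (e y).2)).1 ≤ C := fun x y =>
    Finset.le_sup (f := fun p => ℓ (e (p.1 * p.2)).1) (b := (((e x).2 : G), ((e y).2 : G)))
      (Finset.mem_product.mpr
        ⟨hQ.finite_right.mem_toFinset.mpr (e x).2.2, hQ.finite_right.mem_toFinset.mpr (e y).2.2⟩)
  have hcocycle : ∀ x y, ℓ (e ((e x).2 * (e y).2)).1 + (if x * y ∈ A then 0 else C) ≤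
      (if x ∈ A then 0 else C) + (if y ∈ A then 0 else C) := fun x y => by
    by_cases hx : x ∈ A
    · rw [hQ.equiv_fst_snd_mul_snd_eq_one hQ1 (Or.inl hx), hℓ_one, if_pos hx,
        A.mul_mem_cancel_left hx]
    by_cases hy : y ∈ A
    · rw [hQ.equiv_fst_snd_mul_snd_eq_one hQ1 (Or.inr hy), hℓ_one, if_neg hx, if_pos hy,
        A.mul_mem_cancel_right hy]
      simp [hx]
    · rw [if_neg hx, if_neg hy]
      have := hC x y
      split_ifs <;> omega
  refine ⟨fun x => ℓ (e x).1 + if x ∈ A then 0 else C, fun x y => ?_, fun a => ?_⟩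
  · have h := hℓ_mul ((e x).1 * MulAut.conjNormal ((e x).2 : G) (e y).1)
      (e ((e x).2 * (e y).2)).1
    have h' := hℓ_mul (e x).1 (MulAut.conjNormal ((e x).2 : G) (e y).1)
    have h'' := hℓ_conj (e x).2 (e y).1
    have := hcocycle x y
    have hmul : (e (x * y)).1 = (e x).1 * MulAut.conjNormal ((e x).2 : G) (e y).1 *
        (e ((e x).2 * (e y).2)).1 := hQ.equiv_fst_mul x y
    dsimp only
    rw [hmul]
    omega
  · simp only [a.2, if_true, add_zero]
    rw [hQ.equiv_fst_eq_self_of_mem_of_one_mem hQ1 a.2]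
    rfl

end Extension

section Orbit

open scoped IsMulCommutative

variable {G : Type*} [Group G] {A : Subgroup G} [A.Normal] [IsMulCommutative A]

/-- `Ψ` is the set of conjugates `φ ∘ conj g`, finite since `A` acts trivially on itself. -/
theorem exists_finset_supAbs_conjNormal_le [A.FiniteIndex] (φ : Additive A →+ ℤ) :
    ∃ Ψ : Finset (Additive A →+ ℤ), φ ∈ Ψ ∧ ∀ (g : G) (a : A),
      supAbs Ψ (Additive.ofMul (MulAut.conjNormal g a)) ≤ supAbs Ψ (Additive.ofMul a) := by
  set f : G → (Additive A →+ ℤ) := fun g =>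
    φ.comp (MonoidHom.toAdditive (MulAut.conjNormal g).toMonoidHom)
  have hf : ∀ g h a, f h (Additive.ofMul (MulAut.conjNormal g a)) = f (h * g) (Additive.ofMul a) :=
    fun g h a => by simp [f, map_mul]
  have hfin : (Set.range f).Finite := by
    refine (Set.finite_range fun q : G ⧸ A => f q.out).subset ?_
    rintro _ ⟨g, rfl⟩
    obtain ⟨a, ha⟩ := QuotientGroup.mk_out_eq_mul A g
    have hA : ∀ b : A, MulAut.conjNormal (a : G) b = b := fun b =>
      Subtype.ext <| (MulAut.conjNormal_apply _ b).trans <|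
        congrArg Subtype.val (mul_inv_cancel_comm a b)
    refine ⟨g, ?_⟩
    ext m
    simp [f, ha, map_mul, hA]
  refine ⟨hfin.toFinset, hfin.mem_toFinset.mpr ⟨1, ?_⟩, fun g a => Finset.sup_le fun ψ hψ => ?_⟩
  · ext m
    simp [f]
  · obtain ⟨h, rfl⟩ := hfin.mem_toFinset.mp hψ
    rw [hf]
    exact natAbs_le_supAbs (hfin.mem_toFinset.mpr ⟨h * g, rfl⟩) _

end Orbit

section Assembly

open scoped IsMulCommutative

namespace Subgroup

variable {G : Type*} [Group G] {A : Subgroup G}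

variable (A) in
abbrev inclAdditive (m : Additive A) : G := (m.toMul : G)

theorem inclAdditive_add (m n : Additive A) :
    A.inclAdditive (m + n) = A.inclAdditive m * A.inclAdditive n := rfl

theorem inclAdditive_neg (m : Additive A) : A.inclAdditive (-m) = (A.inclAdditive m)⁻¹ := rfl

theorem inclAdditive_sub (m n : Additive A) :
    A.inclAdditive (m - n) = A.inclAdditive m * (A.inclAdditive n)⁻¹ := by
  rw [sub_eq_add_neg, inclAdditive_add, inclAdditive_neg]

theorem inclAdditive_zsmul (t : ℤ) (m : Additive A) :
    A.inclAdditive (t • m) = A.inclAdditive m ^ t := by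
  simp [inclAdditive]

theorem inclAdditive_nsmul (n : ℕ) (m : Additive A) :
    A.inclAdditive (n • m) = A.inclAdditive m ^ n := by
  simp [inclAdditive]

theorem commute_inclAdditive [IsMulCommutative A] (m n : Additive A) :
    Commute (A.inclAdditive m) (A.inclAdditive n) := by
  rw [Commute, SemiconjBy, ← inclAdditive_add, add_comm, inclAdditive_add]

theorem inclAdditive_mem_closure {Z : Set (Additive A)} {k : Additive A}
    (hk : k ∈ AddSubgroup.closure Z) : A.inclAdditive k ∈ closure (A.inclAdditive '' Z) := by
  induction hk using AddSubgroup.closure_induction with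
  | mem z hz => exact subset_closure ⟨z, hz, rfl⟩
  | zero => exact one_mem _
  | add a b _ _ ha hb => exact mul_mem ha hb
  | neg a _ ha => exact inv_mem ha

end Subgroup

open Subgroup (inclAdditive_add inclAdditive_neg inclAdditive_sub inclAdditive_zsmul
  inclAdditive_nsmul commute_inclAdditive inclAdditive_mem_closure)

variable {G : Type*} [Group G]

theorem exists_finite_forall_eq_zpow_mul_mul {A : Subgroup G} [A.FiniteIndex]
    [IsMulCommutative A] (σ : Additive A →+ ℤ) {w : Additive A} (hw : σ w ≠ 0) {K : Subgroup G}
    (hK : ∀ k, σ k = 0 → A.inclAdditive k ∈ K) :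
    ∃ Y : Set G, Y.Finite ∧
      ∀ x : G, ∃ t : ℤ, ∃ b ∈ K, ∃ y ∈ Y, x = A.inclAdditive w ^ t * b * y := by
  obtain ⟨Q, hQ, -⟩ := A.exists_isComplement_right 1
  obtain ⟨Y₀, hY₀, hdecomp⟩ := exists_finite_forall_eq_zsmul_add_add σ hw
  refine ⟨A.inclAdditive '' Y₀ * Q, (hY₀.image _).mul hQ.finite_right, fun x => ?_⟩
  obtain ⟨t, k, hk, y, hy, hm⟩ := hdecomp (Additive.ofMul (hQ.equiv x).1)
  refine ⟨t, A.inclAdditive k, hK k hk, A.inclAdditive y * (hQ.equiv x).2,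
    Set.mul_mem_mul (Set.mem_image_of_mem _ hy) (hQ.equiv x).2.2, ?_⟩
  rw [← mul_assoc, ← inclAdditive_zsmul, ← inclAdditive_add, ← inclAdditive_add, ← hm]
  exact (hQ.equiv_fst_mul_equiv_snd x).symm

theorem exists_supAbs_subadditive_extension [Group.FG G] (A : Subgroup G) [A.Normal]
    [A.FiniteIndex] [IsMulCommutative A] [Infinite A] :
    ∃ Ψ : Finset (Additive A →+ ℤ), (∃ φ ∈ Ψ, φ ≠ 0) ∧ ∃ ν : G → ℕ,
      (∀ x y, ν (x * y) ≤ ν x + ν y) ∧ ∀ m, ν (A.inclAdditive m) = supAbs Ψ m := by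
  have : Group.FG A := Subgroup.fg_of_index_ne_zero A
  obtain ⟨φ, hφ0⟩ := exists_addMonoidHom_int_ne_zero (Additive A)
  obtain ⟨Ψ, hφΨ, hΨ⟩ := exists_finset_supAbs_conjNormal_le φ
  obtain ⟨ν, hν_mul, hν_A⟩ := A.exists_subadditive_extension (fun a => supAbs Ψ (Additive.ofMul a))
    (supAbs_zero Ψ) (fun a b => supAbs_add_le Ψ _ _) hΨ
  exact ⟨Ψ, ⟨φ, hφΨ, hφ0⟩, ν, hν_mul, fun m => hν_A m.toMul⟩

theorem exists_finSymGen_geodesic_direction [Group.FG G]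
    (A : Subgroup G) [A.Normal] [A.FiniteIndex] [IsMulCommutative A] [Infinite A] :
    ∃ T : Set G, FinSymGen T ∧ ∃ v : G, (∀ m : ℕ, wordLength T (v ^ m) = m) ∧
      ∃ K : Subgroup G, (∀ b ∈ K, Commute v b ∧ ∃ k : ℕ, wordLength T (b * (v ^ k)⁻¹) ≤ k) ∧
        ∃ Y : Set G, Y.Finite ∧ ∀ x : G, ∃ t : ℤ, ∃ b ∈ K, ∃ y ∈ Y, x = v ^ t * b * y := by
  obtain ⟨Ψ, ⟨φ, hφΨ, hφ0⟩, ν, hν_mul, hν⟩ := exists_supAbs_subadditive_extension A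
  obtain ⟨S, hS⟩ := ‹Group.FG G›.out
  obtain ⟨w, σ, Z, hσw, hBw, hker, hZ⟩ := exists_direction_absorbing_ker Ψ hφΨ hφ0
    (S.sup fun s => max (ν s) (ν s⁻¹))
  set T₀ : Set G := (S : Set G) ∪ A.inclAdditive '' insert w ((· - w) '' Z)
  have hT₀ : ∀ t ∈ T₀, ν t ≤ supAbs Ψ w ∧ ν t⁻¹ ≤ supAbs Ψ w := by
    rintro t (ht | ⟨x, hx, rfl⟩)
    · have h := (Finset.le_sup (f := fun s => max (ν s) (ν s⁻¹)) (Finset.mem_coe.mp ht)).trans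
        hBw.le
      exact ⟨(le_max_left _ _).trans h, (le_max_right _ _).trans h⟩
    · have hx : supAbs Ψ x ≤ supAbs Ψ w := by
        rcases hx with rfl | ⟨z, hz, rfl⟩
        exacts [le_rfl, (hZ z hz).2]
      rw [← inclAdditive_neg, hν, hν, supAbs_neg]
      exact ⟨hx, hx⟩
  have hT : FinSymGen (T₀ ∪ T₀⁻¹) := finSymGen_union_inv
    (S.finite_toSet.union (((Z.finite_toSet.image _).insert w).image _))
    (top_le_iff.mp (hS ▸ Subgroup.closure_mono Set.subset_union_left))
  refine ⟨T₀ ∪ T₀⁻¹, hT, A.inclAdditive w, ?_, Subgroup.closure (A.inclAdditive '' Z),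
    fun b hb => ?_, exists_finite_forall_eq_zpow_mul_mul σ hσw fun k hk =>
      inclAdditive_mem_closure (hker hk)⟩
  · refine wordLength_pow_eq hT.2.1 hT.2.2 ((hν 0).trans (supAbs_zero Ψ)) hν_mul
      ((Nat.zero_le _).trans_lt hBw) (fun t ht => ?_)
      (Or.inl (Or.inr ⟨w, Set.mem_insert w _, rfl⟩)) fun m => ?_
    · rcases ht with ht | ht
      exacts [(hT₀ t ht).1, by simpa using (hT₀ _ ht).2]
    · rw [← inclAdditive_nsmul, hν, supAbs_nsmul]
  · refine commute_and_exists_wordLength_mul_inv_pow_le hT.2.1 hT.2.2 ?_ hb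
    rintro _ ⟨z, hz, rfl⟩
    refine ⟨commute_inclAdditive w z, Or.inl (Or.inr ?_), Or.inl (Or.inr ?_)⟩
    · exact ⟨z - w, Set.mem_insert_of_mem _ ⟨z, hz, rfl⟩, inclAdditive_sub z w⟩
    · exact ⟨-z - w, Set.mem_insert_of_mem _ ⟨-z, (hZ z hz).1, rfl⟩, inclAdditive_sub (-z) w⟩

end Assembly

/-- A finitely generated infinite virtually abelian group has a
finite symmetric generating set `T` such that the metric-functional boundary of
the word metric `d_T` contains a point with finite orbit. -/
theorem virtually_abelian_exists_cayley_finiteOrbit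
    {G : Type*} [Group G] [Group.FG G] [Infinite G]
    (hab : ∃ A : Subgroup G, A.FiniteIndex ∧ ∀ x y : A, x * y = y * x) :
    ∃ T : Set G, FinSymGen T ∧
      ∃ f : G → ℝ, InBoundary (wordDist T) f ∧
        (Set.range fun x : G => act x f).Finite := by
  obtain ⟨A₀, _, hcomm⟩ := hab
  set A := A₀.normalCore
  have : IsMulCommutative A := isMulCommutative_iff.mpr fun a b => Subtype.ext
    (congrArg Subtype.val (hcomm ⟨a, A₀.normalCore_le a.2⟩ ⟨b, A₀.normalCore_le b.2⟩) :)
  have : Infinite A := by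
    refine not_finite_iff_infinite.mp fun hfin => ?_
    have := A.finite_iff_finite_and_finiteIndex.mpr ⟨hfin, inferInstance⟩
    exact not_finite G
  obtain ⟨T, hT, v, hlen, K, hK, Y, hY, hcover⟩ := exists_finSymGen_geodesic_direction A
  exact ⟨T, hT, _, inBoundary_horofunction hT.2.1 hT.2.2 hlen,
    finite_range_act_horofunction hT.2.1 hT.2.2 hlen hK hY hcover⟩
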